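/- arXiv:1009.4779 — 2 statements merged into one kernel-verified Lean document; each statement's English description precedes it below -/
import Mathlib

section
/- With P^{iJ} = (1/√((n−1)!)) {x^i, x^{j_1},…,x^{j_{n-1}}} and (P²)^{ik} = P^{iI} P^{kJ} ḡ_{IJ}, the map γ^{-2} P² : TM → TM (indices lowered with ḡ) is the orthogonal projection of TM onto the tangent space TΣ ⊂ TM; in particular P²(X) = γ² ḡ(X, e_a) g^{ab} e_b for every X ∈ TM, and P²(Y) = γ² Y for every Y ∈ TΣ. -/
open scoped BigOperators

/-- The totally antisymmetric Levi-Civita symbol. -/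
noncomputable def leviCivita {n : ℕ} (σ : Fin n → Fin n) : ℝ :=
  if h : Function.Bijective σ then ((Equiv.Perm.sign (Equiv.ofBijective σ h) : ℤ) : ℝ) else 0

/-- Partial derivative `∂_a f` on the coordinate chart `Fin n → ℝ`. -/
noncomputable def pd {n : ℕ} (a : Fin n) (f : (Fin n → ℝ) → ℝ) (u : Fin n → ℝ) : ℝ :=
  fderiv ℝ f u (Pi.single a 1)

/-- The Nambu bracket `{f₁,…,f_n} = ρ⁻¹ ε^{a₁⋯a_n} (∂_{a₁}f₁)⋯(∂_{a_n}f_n)`. -/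
noncomputable def nambu {n : ℕ} (ρ : (Fin n → ℝ) → ℝ)
    (F : Fin n → ((Fin n → ℝ) → ℝ)) (u : Fin n → ℝ) : ℝ :=
  (ρ u)⁻¹ * ∑ σ : Fin n → Fin n, leviCivita σ * ∏ b, pd (σ b) (F b) u

/-- The induced metric `g_{ab} = ḡ_{ij} ∂_a xⁱ ∂_b xʲ`. -/
noncomputable def inducedMetric {n m : ℕ}
    (G : (Fin (n + 1) → ℝ) → Matrix (Fin m) (Fin m) ℝ)
    (x : Fin m → (Fin (n + 1) → ℝ) → ℝ) (u : Fin (n + 1) → ℝ) :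
    Matrix (Fin (n + 1)) (Fin (n + 1)) ℝ :=
  Matrix.of fun a b => ∑ i, ∑ j, G u i j * pd a (x i) u * pd b (x j) u

/-- `(P²)^{ik} = P^{iI} P^{kJ} ḡ_{IJ}` with
`P^{iJ} = (1/√(n!)) {xⁱ, x^{j₁},…,x^{j_n}}`. -/
noncomputable def Psq {n m : ℕ} (ρ : (Fin (n + 1) → ℝ) → ℝ)
    (x : Fin m → (Fin (n + 1) → ℝ) → ℝ)
    (G : (Fin (n + 1) → ℝ) → Matrix (Fin m) (Fin m) ℝ)
    (u : Fin (n + 1) → ℝ) (i k : Fin m) : ℝ :=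
  (1 / (Nat.factorial n : ℝ)) *
    ∑ I : Fin n → Fin m, ∑ J : Fin n → Fin m,
      nambu ρ (fun b => x ((Fin.cons i I : Fin (n + 1) → Fin m) b)) u *
        (∏ a, G u (I a) (J a)) *
        nambu ρ (fun b => x ((Fin.cons k J : Fin (n + 1) → Fin m) b)) u

lemma sum_leviCivita_mul {n : ℕ} (f : (Fin n → Fin n) → ℝ) :
    ∑ σ : Fin n → Fin n, leviCivita σ * f σ
      = ∑ π : Equiv.Perm (Fin n), ((Equiv.Perm.sign π : ℤ) : ℝ) * f ⇑π := by
  classical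
  rw [← Finset.sum_filter_add_sum_filter_not Finset.univ (fun σ => Function.Bijective σ)]
  have h2 : ∑ σ ∈ Finset.univ.filter (fun σ => ¬ Function.Bijective σ),
      leviCivita σ * f σ = 0 := by
    apply Finset.sum_eq_zero
    intro σ hσ
    rw [leviCivita, dif_neg (Finset.mem_filter.mp hσ).2, zero_mul]
  rw [h2, add_zero]
  refine Finset.sum_bij (fun (π : Equiv.Perm (Fin n)) _ => ⇑π) ?_ ?_ ?_ ?_ |>.symm
  · intro π _; exact Finset.mem_filter.mpr ⟨Finset.mem_univ _, π.bijective⟩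
  · intro π1 _ π2 _ h; exact Equiv.coe_fn_injective h
  · intro σ hσ
    exact ⟨Equiv.ofBijective σ (Finset.mem_filter.mp hσ).2, Finset.mem_univ _, rfl⟩
  · intro π _
    have h1 : Equiv.ofBijective (⇑π) π.bijective = π := by ext y; rfl
    rw [leviCivita, dif_pos π.bijective, h1]


lemma sum_perm_zero {n : ℕ} (h : Fin (n + 1) → ℝ) :
    ∑ σ : Equiv.Perm (Fin (n + 1)), h (σ 0)
      = (Nat.factorial n : ℝ) * ∑ c, h c := by
  classical
  rw [← Equiv.sum_comp (Equiv.Perm.decomposeFin (n := n)).symm (fun σ => h (σ 0))]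
  simp only [Fintype.sum_prod_type, Equiv.Perm.decomposeFin_symm_apply_zero]
  simp [Finset.sum_const, Fintype.card_perm, Fintype.card_fin, Finset.mul_sum, mul_comm]

lemma pair_sum {k m : ℕ} (A B : Fin k → Fin m → ℝ) (C : Matrix (Fin m) (Fin m) ℝ) :
    ∑ I : Fin k → Fin m, ∑ J : Fin k → Fin m,
        (∏ a, A a (I a)) * (∏ a, C (I a) (J a)) * (∏ a, B a (J a))
      = ∏ a, ∑ p, ∑ q, C p q * A a p * B a q := by
  classical
  have h1 : ∀ (I J : Fin k → Fin m),
      (∏ a, A a (I a)) * (∏ a, C (I a) (J a)) * (∏ a, B a (J a))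
        = ∏ a, (A a (I a) * C (I a) (J a) * B a (J a)) := by
    intro I J; rw [← Finset.prod_mul_distrib, ← Finset.prod_mul_distrib]
  simp_rw [h1]
  rw [show (∏ a, ∑ p, ∑ q, C p q * A a p * B a q)
      = ∏ a, ∑ pq : Fin m × Fin m, A a pq.1 * C pq.1 pq.2 * B a pq.2 by
    refine Finset.prod_congr rfl fun a _ => ?_
    rw [Fintype.sum_prod_type]
    exact Finset.sum_congr rfl fun p _ => Finset.sum_congr rfl fun q _ => by ring]
  rw [Fintype.prod_sum (fun a (pq : Fin m × Fin m) => A a pq.1 * C pq.1 pq.2 * B a pq.2)]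
  rw [← Equiv.sum_comp (Equiv.arrowProdEquivProdArrow (Fin k) (fun _ => Fin m) (fun _ => Fin m)).symm]
  rw [Fintype.sum_prod_type]
  rfl

lemma det_updateRow_eq {n : ℕ} (g : Matrix (Fin n) (Fin n) ℝ) (c : Fin n) (w : Fin n → ℝ) :
    (g.updateRow c w).det = ∑ d, g.adjugate d c * w d := by
  classical
  rw [← Matrix.cramer_transpose_apply, Matrix.cramer_eq_adjugate_mulVec]
  rw [Matrix.mulVec, dotProduct]
  refine Finset.sum_congr rfl fun d _ => ?_
  rw [← Matrix.adjugate_transpose]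
  rfl

noncomputable abbrev sgn {N : ℕ} (π : Equiv.Perm (Fin N)) : ℝ := ((Equiv.Perm.sign π : ℤ) : ℝ)

lemma inner_perm_det {n : ℕ} (g : Matrix (Fin (n + 1)) (Fin (n + 1)) ℝ)
    (w : Fin (n + 1) → ℝ) (π : Equiv.Perm (Fin (n + 1))) :
    ∑ τ : Equiv.Perm (Fin (n + 1)),
        sgn π * sgn τ * (w (τ 0) * ∏ a : Fin n, g (π a.succ) (τ a.succ))
      = (g.updateRow (π 0) w).det := by
  classical
  -- substitute τ = π * μ
  rw [← Equiv.sum_comp (Equiv.mulLeft π) (fun τ => sgn π * sgn τ *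
      (w (τ 0) * ∏ a : Fin n, g (π a.succ) (τ a.succ)))]
  have hs : ∀ μ : Equiv.Perm (Fin (n + 1)), sgn π * sgn (π * μ) = sgn μ := by
    intro μ
    simp only [sgn, Equiv.Perm.sign_mul]
    push_cast
    rcases Int.units_eq_one_or (Equiv.Perm.sign π) with h | h <;> simp [h] <;> ring
  -- the matrix whose determinant we compute
  set N : Matrix (Fin (n + 1)) (Fin (n + 1)) ℝ :=
    (g.updateRow (π 0) w).submatrix ⇑π ⇑π with hN
  have hentry : ∀ μ : Equiv.Perm (Fin (n + 1)),
      w (π (μ 0)) * ∏ a : Fin n, g (π a.succ) (π (μ a.succ))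
        = ∏ b, N b (μ b) := by
    intro μ
    rw [Fin.prod_univ_succ]
    congr 1
    · simp [hN, Matrix.submatrix_apply, Matrix.updateRow_self]
    · refine Finset.prod_congr rfl fun a _ => ?_
      have : π a.succ ≠ π 0 := fun h => (Fin.succ_ne_zero a) (π.injective h)
      simp [hN, Matrix.submatrix_apply, Matrix.updateRow_ne this]
  have key : ∑ μ : Equiv.Perm (Fin (n + 1)), sgn μ * ∏ b, N b (μ b) = N.det := by
    rw [← Matrix.det_transpose N, Matrix.det_apply']
    exact Finset.sum_congr rfl fun μ _ => rfl
  calc ∑ μ : Equiv.Perm (Fin (n + 1)), sgn π * sgn ((Equiv.mulLeft π) μ) *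
        (w (((Equiv.mulLeft π) μ) 0) * ∏ a : Fin n, g (π a.succ) (((Equiv.mulLeft π) μ) a.succ))
      = ∑ μ : Equiv.Perm (Fin (n + 1)), sgn μ * ∏ b, N b (μ b) := by
        refine Finset.sum_congr rfl fun μ _ => ?_
        rw [show ((Equiv.mulLeft π) μ) = π * μ from rfl, hs μ, ← hentry μ]
        rfl
    _ = N.det := key
    _ = (g.updateRow (π 0) w).det := Matrix.det_submatrix_equiv_self π _


lemma nambu_cons {n m : ℕ} (ρ : (Fin (n + 1) → ℝ) → ℝ)
    (x : Fin m → (Fin (n + 1) → ℝ) → ℝ) (u : Fin (n + 1) → ℝ)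
    (i : Fin m) (I : Fin n → Fin m) :
    nambu ρ (fun b => x ((Fin.cons i I : Fin (n + 1) → Fin m) b)) u
      = (ρ u)⁻¹ * ∑ π : Equiv.Perm (Fin (n + 1)),
          sgn π * (pd (π 0) (x i) u * ∏ a : Fin n, pd (π a.succ) (x (I a)) u) := by
  rw [nambu, sum_leviCivita_mul]
  congr 1
  refine Finset.sum_congr rfl fun π _ => ?_
  congr 1
  rw [Fin.prod_univ_succ]
  simp [Fin.cons_zero, Fin.cons_succ]


lemma sum4_swap {α β γ δ : Type*} [Fintype α] [Fintype β] [Fintype γ] [Fintype δ]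
    (f : α → β → γ → δ → ℝ) :
    ∑ a, ∑ b, ∑ c, ∑ d, f a b c d = ∑ c, ∑ d, ∑ a, ∑ b, f a b c d := by
  calc ∑ a, ∑ b, ∑ c, ∑ d, f a b c d
      = ∑ a, ∑ c, ∑ b, ∑ d, f a b c d :=
        Finset.sum_congr rfl fun a _ => Finset.sum_comm
    _ = ∑ c, ∑ a, ∑ b, ∑ d, f a b c d := Finset.sum_comm
    _ = ∑ c, ∑ a, ∑ d, ∑ b, f a b c d :=
        Finset.sum_congr rfl fun c _ => Finset.sum_congr rfl fun a _ => Finset.sum_comm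
    _ = ∑ c, ∑ d, ∑ a, ∑ b, f a b c d :=
        Finset.sum_congr rfl fun c _ => Finset.sum_comm

lemma Psq_eq {n m : ℕ} (ρ : (Fin (n + 1) → ℝ) → ℝ)
    (x : Fin m → (Fin (n + 1) → ℝ) → ℝ)
    (G : (Fin (n + 1) → ℝ) → Matrix (Fin m) (Fin m) ℝ)
    (u : Fin (n + 1) → ℝ) (i k : Fin m) :
    Psq ρ x G u i k
      = ((ρ u)⁻¹) ^ 2 * ∑ c, ∑ d,
          (inducedMetric G x u).adjugate d c * pd c (x i) u * pd d (x k) u := by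
  classical
  set r : ℝ := (ρ u)⁻¹ with hr
  set E : Fin (n + 1) → Fin m → ℝ := fun a j => pd a (x j) u with hE
  set g : Matrix (Fin (n + 1)) (Fin (n + 1)) ℝ := inducedMetric G x u with hg
  have hgab : ∀ a b, g a b = ∑ p, ∑ q, G u p q * E a p * E b q := fun a b => rfl
  rw [Psq]
  simp_rw [nambu_cons]
  -- turn each summand into a quadruple sum
  have step1 : ∀ (I J : Fin n → Fin m),
      (r * ∑ π : Equiv.Perm (Fin (n + 1)),
          sgn π * (E (π 0) i * ∏ a : Fin n, E (π a.succ) (I a))) *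
        (∏ a, G u (I a) (J a)) *
        (r * ∑ τ : Equiv.Perm (Fin (n + 1)),
          sgn τ * (E (τ 0) k * ∏ a : Fin n, E (τ a.succ) (J a)))
      = ∑ π : Equiv.Perm (Fin (n + 1)), ∑ τ : Equiv.Perm (Fin (n + 1)),
          r ^ 2 * (sgn π * sgn τ * (E (π 0) i * E (τ 0) k)) *
            ((∏ a, E (π a.succ) (I a)) * (∏ a, G u (I a) (J a)) *
              (∏ a, E (τ a.succ) (J a))) := by
    intro I J
    rw [show ∀ (S T C : ℝ), (r * S) * C * (r * T) = (S * T) * (r ^ 2 * C) from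
      fun S T C => by ring, Finset.sum_mul_sum, Finset.sum_mul]
    refine Finset.sum_congr rfl fun π _ => ?_
    rw [Finset.sum_mul]
    exact Finset.sum_congr rfl fun τ _ => by ring
  rw [Finset.sum_congr rfl fun I _ => Finset.sum_congr rfl fun J _ => step1 I J]
  rw [sum4_swap]
  -- evaluate the inner I, J sums
  have step2 : ∀ (π τ : Equiv.Perm (Fin (n + 1))),
      ∑ I : Fin n → Fin m, ∑ J : Fin n → Fin m,
        r ^ 2 * (sgn π * sgn τ * (E (π 0) i * E (τ 0) k)) *
          ((∏ a, E (π a.succ) (I a)) * (∏ a, G u (I a) (J a)) *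
            (∏ a, E (τ a.succ) (J a)))
      = r ^ 2 * (sgn π * sgn τ * (E (π 0) i * E (τ 0) k)) *
          ∏ a : Fin n, g (π a.succ) (τ a.succ) := by
    intro π τ
    simp_rw [← Finset.mul_sum]
    congr 1
    rw [pair_sum (fun a p => E (π a.succ) p) (fun a q => E (τ a.succ) q) (G u)]
    exact Finset.prod_congr rfl fun a _ => (hgab _ _).symm
  simp_rw [step2]
  -- inner τ-sum is a determinant
  have step3 : ∀ π : Equiv.Perm (Fin (n + 1)),
      ∑ τ : Equiv.Perm (Fin (n + 1)),
        r ^ 2 * (sgn π * sgn τ * (E (π 0) i * E (τ 0) k)) *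
          ∏ a : Fin n, g (π a.succ) (τ a.succ)
      = r ^ 2 * E (π 0) i * (g.updateRow (π 0) (fun d => E d k)).det := by
    intro π
    rw [← inner_perm_det g (fun d => E d k) π, Finset.mul_sum]
    exact Finset.sum_congr rfl fun τ _ => by ring
  simp_rw [step3]
  -- the π-sum collapses by counting
  have step4 : ∑ π : Equiv.Perm (Fin (n + 1)),
      r ^ 2 * E (π 0) i * (g.updateRow (π 0) (fun d => E d k)).det
      = (Nat.factorial n : ℝ) * ∑ c,
          r ^ 2 * E c i * (g.updateRow c (fun d => E d k)).det :=
    sum_perm_zero (fun c => r ^ 2 * E c i * (g.updateRow c (fun d => E d k)).det)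
  rw [step4, ← mul_assoc, one_div,
    inv_mul_cancel₀ (by exact_mod_cast Nat.factorial_ne_zero n), one_mul]
  rw [Finset.mul_sum]
  refine Finset.sum_congr rfl fun c _ => ?_
  rw [det_updateRow_eq, Finset.mul_sum, Finset.mul_sum]
  exact Finset.sum_congr rfl fun d _ => by ring


lemma sum4_swap' {α β γ δ : Type*} [Fintype α] [Fintype β] [Fintype γ] [Fintype δ]
    (f : α → β → γ → δ → ℝ) :
    ∑ a, ∑ b, ∑ c, ∑ d, f a b c d = ∑ c, ∑ d, ∑ a, ∑ b, f a b c d := by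
  calc ∑ a, ∑ b, ∑ c, ∑ d, f a b c d
      = ∑ a, ∑ c, ∑ b, ∑ d, f a b c d :=
        Finset.sum_congr rfl fun a _ => Finset.sum_comm
    _ = ∑ c, ∑ a, ∑ b, ∑ d, f a b c d := Finset.sum_comm
    _ = ∑ c, ∑ a, ∑ d, ∑ b, f a b c d :=
        Finset.sum_congr rfl fun c _ => Finset.sum_congr rfl fun a _ => Finset.sum_comm
    _ = ∑ c, ∑ d, ∑ a, ∑ b, f a b c d :=
        Finset.sum_congr rfl fun c _ => Finset.sum_comm

lemma sum3_swap {α β γ : Type*} [Fintype α] [Fintype β] [Fintype γ]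
    (f : α → β → γ → ℝ) :
    ∑ a, ∑ b, ∑ c, f a b c = ∑ c, ∑ a, ∑ b, f a b c := by
  calc ∑ a, ∑ b, ∑ c, f a b c
      = ∑ a, ∑ c, ∑ b, f a b c := Finset.sum_congr rfl fun a _ => Finset.sum_comm
    _ = ∑ c, ∑ a, ∑ b, f a b c := Finset.sum_comm

/-- `γ⁻² P²` is the orthogonal projection of `TM` onto `TΣ`:
`P²(X) = γ² ḡ(X,e_a) g^{ab} e_b` for every `X ∈ TM`, and `P²(Y) = γ² Y` for
every tangent vector `Y = c^a e_a ∈ TΣ`. -/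
theorem Psq_is_projection_onto_tangent_space {n m : ℕ}
    (ρ : (Fin (n + 1) → ℝ) → ℝ)
    (x : Fin m → (Fin (n + 1) → ℝ) → ℝ)
    (G : (Fin (n + 1) → ℝ) → Matrix (Fin m) (Fin m) ℝ)
    (hρ : ∀ u, ρ u ≠ 0)
    (hx : ∀ i, ContDiff ℝ (⊤ : ℕ∞) (x i))
    (hG : ∀ u, (G u).IsSymm)
    (hreg : ∀ u, IsUnit (inducedMetric G x u).det)
    (u : Fin (n + 1) → ℝ) :
    (∀ X : Fin m → ℝ, ∀ i : Fin m,
        ∑ k, ∑ j, Psq ρ x G u i k * G u k j * X j =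
          ((inducedMetric G x u).det / (ρ u) ^ 2) *
            ∑ a, ∑ b, (∑ p, ∑ q, G u p q * X p * pd a (x q) u) *
              (inducedMetric G x u)⁻¹ a b * pd b (x i) u) ∧
    (∀ c : Fin (n + 1) → ℝ, ∀ i : Fin m,
        ∑ k, ∑ j, Psq ρ x G u i k * G u k j * (∑ a, c a * pd a (x j) u) =
          ((inducedMetric G x u).det / (ρ u) ^ 2) *
            ∑ a, c a * pd a (x i) u) := by
  classical
  set E : Fin (n + 1) → Fin m → ℝ := fun a j => pd a (x j) u with hE
  set g : Matrix (Fin (n + 1)) (Fin (n + 1)) ℝ := inducedMetric G x u with hg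
  set adj : Matrix (Fin (n + 1)) (Fin (n + 1)) ℝ := g.adjugate with hadj
  have hgab : ∀ a b, g a b = ∑ p, ∑ q, G u p q * E a p * E b q := fun a b => rfl
  have hGsym : ∀ p q, G u p q = G u q p := fun p q => ((hG u).apply p q).symm
  have hD : g.det ≠ 0 := (hreg u).ne_zero
  -- g is symmetric
  have hgsym : ∀ a b, g a b = g b a := by
    intro a b
    rw [hgab, hgab, Finset.sum_comm]
    refine Finset.sum_congr rfl fun q _ => Finset.sum_congr rfl fun p _ => ?_
    rw [hGsym p q]; ring
  -- inverse entries
  have hinv : ∀ a b, g⁻¹ a b = (g.det)⁻¹ * adj a b := by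
    intro a b
    rw [Matrix.inv_def, Matrix.smul_apply, Ring.inverse_eq_inv', smul_eq_mul]
  -- combined LHS computation for any X
  have hLHS : ∀ (X : Fin m → ℝ) (i : Fin m),
      ∑ k, ∑ j, Psq ρ x G u i k * G u k j * X j
        = ∑ c, ∑ d, ((ρ u)⁻¹ ^ 2 * adj d c * E c i) *
            (∑ k, ∑ j, E d k * G u k j * X j) := by
    intro X i
    simp_rw [Psq_eq ρ x G u i]
    calc ∑ k, ∑ j, ((ρ u)⁻¹ ^ 2 * ∑ c, ∑ d, adj d c * pd c (x i) u * pd d (x k) u)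
            * G u k j * X j
        = ∑ k, ∑ j, ∑ c, ∑ d, ((ρ u)⁻¹ ^ 2 * adj d c * E c i) *
            (E d k * G u k j * X j) := by
          refine Finset.sum_congr rfl fun k _ => Finset.sum_congr rfl fun j _ => ?_
          simp_rw [Finset.mul_sum, Finset.sum_mul]
          exact Finset.sum_congr rfl fun c _ => Finset.sum_congr rfl fun d _ => by
            simp only [hE]; ring
      _ = ∑ c, ∑ d, ∑ k, ∑ j, ((ρ u)⁻¹ ^ 2 * adj d c * E c i) *
            (E d k * G u k j * X j) := sum4_swap' _
      _ = ∑ c, ∑ d, ((ρ u)⁻¹ ^ 2 * adj d c * E c i) *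
            (∑ k, ∑ j, E d k * G u k j * X j) := by
          refine Finset.sum_congr rfl fun c _ => Finset.sum_congr rfl fun d _ => ?_
          simp_rw [Finset.mul_sum]
  constructor
  · -- first claim
    intro X i
    rw [hLHS X i]
    -- rewrite the RHS
    have hRHS : (g.det / (ρ u) ^ 2) *
          ∑ a, ∑ b, (∑ p, ∑ q, G u p q * X p * pd a (x q) u) * g⁻¹ a b * pd b (x i) u
        = ∑ a, ∑ b, ((ρ u)⁻¹ ^ 2 * adj a b * E b i) *
            (∑ p, ∑ q, G u p q * X p * E a q) := by
      rw [Finset.mul_sum]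
      refine Finset.sum_congr rfl fun a _ => ?_
      rw [Finset.mul_sum]
      refine Finset.sum_congr rfl fun b _ => ?_
      rw [hinv a b]
      simp only [hE]
      rw [show (g.det / (ρ u) ^ 2) *
          ((∑ p, ∑ q, G u p q * X p * pd a (x q) u) * (g.det⁻¹ * adj a b) * pd b (x i) u)
        = (g.det * g.det⁻¹) * (((ρ u)⁻¹ ^ 2 * adj a b * pd b (x i) u) *
            (∑ p, ∑ q, G u p q * X p * pd a (x q) u)) from by ring,
        mul_inv_cancel₀ hD, one_mul]
    rw [hRHS, Finset.sum_comm]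
    refine Finset.sum_congr rfl fun c _ => Finset.sum_congr rfl fun d _ => ?_
    -- here outer index c matches RHS's b, inner d matches RHS's a
    congr 1
    -- remains: inner double sums agree
    rw [Finset.sum_comm]
    refine Finset.sum_congr rfl fun k _ => Finset.sum_congr rfl fun j _ => ?_
    rw [hGsym]
    ring
  · -- second claim
    intro c i
    have hX : ∀ j, (∑ a, c a * pd a (x j) u) = ∑ a, c a * E a j := fun j => rfl
    rw [show (∑ k, ∑ j, Psq ρ x G u i k * G u k j * (∑ a, c a * pd a (x j) u))
        = ∑ k, ∑ j, Psq ρ x G u i k * G u k j * (fun j => ∑ a, c a * E a j) j from rfl]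
    rw [hLHS (fun j => ∑ a, c a * E a j) i]
    -- compute the inner double sum: ∑ k ∑ j E d k G k j (∑ e c e E e j) = ∑ e c e * g d e
    have hZ : ∀ d, (∑ k, ∑ j, E d k * G u k j * (∑ e, c e * E e j))
        = ∑ e, c e * g d e := by
      intro d
      calc ∑ k, ∑ j, E d k * G u k j * (∑ e, c e * E e j)
          = ∑ k, ∑ j, ∑ e, c e * (G u k j * E d k * E e j) := by
            refine Finset.sum_congr rfl fun k _ => Finset.sum_congr rfl fun j _ => ?_
            rw [Finset.mul_sum]
            exact Finset.sum_congr rfl fun e _ => by ring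
        _ = ∑ e, ∑ k, ∑ j, c e * (G u k j * E d k * E e j) := sum3_swap _
        _ = ∑ e, c e * g d e := by
            refine Finset.sum_congr rfl fun e _ => ?_
            rw [hgab d e, Finset.mul_sum]
            exact Finset.sum_congr rfl fun p _ => (Finset.mul_sum _ _ _).symm
    simp_rw [hZ]
    -- now: ∑ cc ∑ d (r² adj d cc E cc i) * ∑ e c e g d e = (det/ρ²) ∑ a c a E a i
    calc ∑ cc, ∑ d, ((ρ u)⁻¹ ^ 2 * adj d cc * E cc i) * (∑ e, c e * g d e)
        = ∑ cc, ∑ e, ((ρ u)⁻¹ ^ 2 * E cc i * c e) * (∑ d, g e d * adj d cc) := by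
          refine Finset.sum_congr rfl fun cc _ => ?_
          calc ∑ d, ((ρ u)⁻¹ ^ 2 * adj d cc * E cc i) * (∑ e, c e * g d e)
              = ∑ d, ∑ e, ((ρ u)⁻¹ ^ 2 * E cc i * c e) * (g e d * adj d cc) := by
                refine Finset.sum_congr rfl fun d _ => ?_
                rw [Finset.mul_sum]
                refine Finset.sum_congr rfl fun e _ => ?_
                rw [hgsym d e]; ring
            _ = ∑ e, ∑ d, ((ρ u)⁻¹ ^ 2 * E cc i * c e) * (g e d * adj d cc) :=
                Finset.sum_comm
            _ = ∑ e, ((ρ u)⁻¹ ^ 2 * E cc i * c e) * (∑ d, g e d * adj d cc) := by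
                refine Finset.sum_congr rfl fun e _ => ?_
                rw [Finset.mul_sum]
      _ = ∑ cc, ∑ e, ((ρ u)⁻¹ ^ 2 * E cc i * c e) * (g.det * (1 : Matrix _ _ ℝ) e cc) := by
          refine Finset.sum_congr rfl fun cc _ => Finset.sum_congr rfl fun e _ => ?_
          congr 1
          have := Matrix.mul_adjugate g
          have h2 : (g * g.adjugate) e cc = (g.det • (1 : Matrix _ _ ℝ)) e cc := by rw [this]
          rw [Matrix.mul_apply] at h2
          rw [Matrix.smul_apply, smul_eq_mul] at h2
          exact h2
      _ = ∑ cc, ((ρ u)⁻¹ ^ 2 * E cc i * c cc) * g.det := by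
          refine Finset.sum_congr rfl fun cc _ => ?_
          rw [Finset.sum_eq_single cc]
          · rw [Matrix.one_apply_eq]; ring
          · intro e _ he; rw [Matrix.one_apply_ne he]; ring
          · intro h; exact absurd (Finset.mem_univ cc) h
      _ = (g.det / (ρ u) ^ 2) * ∑ a, c a * pd a (x i) u := by
          rw [Finset.mul_sum]
          refine Finset.sum_congr rfl fun a _ => ?_
          simp only [hE]
          field_simp
end

section
/- For the fuzzy sphere: let S^1, S^2, S^3 be hermitian N×N matrices with [S^j, S^k] = i ε^{jk}_l S^l and (S^1)² + (S^2)² + (S^3)² = ((N²−1)/4)·1, set ℏ = 2/√(N²−1) and X^i = ℏ S^i. Then −ℏ^{-2} ∑_{1≤i<j≤3} [X^i, X^j]² = 1_N, and consequently the discrete Euler characteristic χ̂_N = ℏ Tr(1_N) = 2N/√(N²−1) converges to 2 as N → ∞. -/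
open scoped BigOperators Topology

/-!
The `su(2)` relations say `[Sʲ, Sʲ⁺¹] = i Sʲ⁺²` cyclically, so each squared commutator
`[Sⁱ, Sʲ]²` with `i < j` is minus the square of the remaining generator, and the sum of the
three is minus the Casimir `(N² − 1)/4 = ℏ⁻²`. Scaling by `ℏ` multiplies the sum by `ℏ⁴`.
-/

open Filter

lemma leviCivita_perm {n : ℕ} (σ : Equiv.Perm (Fin n)) :
    leviCivita ⇑σ = ((Equiv.Perm.sign σ : ℤ) : ℝ) := by
  rw [leviCivita, dif_pos σ.bijective, show Equiv.ofBijective σ σ.bijective = σ from Equiv.ext fun _ => rfl]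

lemma leviCivita_eq_zero_of_apply_eq {n : ℕ} {σ : Fin n → Fin n} {a b : Fin n} (hab : a ≠ b)
    (h : σ a = σ b) : leviCivita σ = 0 :=
  dif_neg fun hσ => hab (hσ.injective h)

lemma leviCivita_cyclic (j : Fin 3) : leviCivita ![j, j + 1, j + 2] = 1 := by
  have hsign : ∀ k : Fin 3, Equiv.Perm.sign (Equiv.addLeft k) = 1 := by decide
  have hrot : ![j, j + 1, j + 2] = ⇑(Equiv.addLeft j) := by
    funext i
    fin_cases i <;> simp
  rw [hrot, leviCivita_perm, hsign, Units.val_one, Int.cast_one]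

section SU2

variable {A : Type*} [Ring A] [Algebra ℂ A]

lemma commutator_cyclic_of_leviCivita {X : Fin 3 → A}
    (hX : ∀ j k, X j * X k - X k * X j = Complex.I • ∑ l, (leviCivita ![j, k, l] : ℂ) • X l)
    (j : Fin 3) : X j * X (j + 1) - X (j + 1) * X j = Complex.I • X (j + 2) := by
  rw [hX, Finset.sum_eq_single (j + 2), leviCivita_cyclic, Complex.ofReal_one, one_smul]
  · intro m _ hm
    have hcases : m = j ∨ m = j + 1 := by revert j m; decide
    rcases hcases with rfl | rfl
    · rw [leviCivita_eq_zero_of_apply_eq (a := 0) (b := 2) (by decide) rfl]; simp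
    · rw [leviCivita_eq_zero_of_apply_eq (a := 1) (b := 2) (by decide) rfl]; simp
  · simp

lemma sum_sq_commutator_eq_neg_casimir {X : Fin 3 → A}
    (hX : ∀ j, X j * X (j + 1) - X (j + 1) * X j = Complex.I • X (j + 2)) :
    ∑ i : Fin 3, ∑ j : Fin 3, (if i < j then (X i * X j - X j * X i) ^ 2 else 0) =
      -(X 0 * X 0 + X 1 * X 1 + X 2 * X 2) := by
  have h01 : X 0 * X 1 - X 1 * X 0 = Complex.I • X 2 := hX 0
  have h12 : X 1 * X 2 - X 2 * X 1 = Complex.I • X 0 := hX 1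
  have h20 : X 2 * X 0 - X 0 * X 2 = Complex.I • X 1 := hX 2
  have h02 : X 0 * X 2 - X 2 * X 0 = -(Complex.I • X 1) := by
    rw [← neg_sub, h20]
  have hsq : ∀ x : A, (Complex.I • x) ^ 2 = -(x * x) := fun x => by
    rw [sq, smul_mul_smul_comm, Complex.I_mul_I, neg_one_smul]
  simp only [Fin.sum_univ_three, Fin.reduceLT, if_true, if_false, add_zero, zero_add]
  rw [h01, h02, h12, neg_sq, hsq, hsq, hsq]
  abel

end SU2

lemma commutator_smul_smul {R A : Type*} [CommSemiring R] [Ring A] [Algebra R A] (r : R)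
    (x y : A) : (r • x) * (r • y) - (r • y) * (r • x) = r ^ 2 • (x * y - y * x) := by
  simp only [smul_mul_smul_comm, smul_sub, sq]

lemma sum_sq_commutator_smul {ι R A : Type*} [Fintype ι] [LinearOrder ι] [CommSemiring R] [Ring A]
    [Algebra R A] (r : R) (X : ι → A) :
    ∑ i, ∑ j, (if i < j then ((r • X i) * (r • X j) - (r • X j) * (r • X i)) ^ 2 else 0) =
      r ^ 4 • ∑ i, ∑ j, (if i < j then (X i * X j - X j * X i) ^ 2 else 0) := by
  simp only [Finset.smul_sum, smul_ite, smul_zero, commutator_smul_smul, smul_pow, ← pow_mul]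

lemma tendsto_mul_div_sqrt_sq_sub_one (a : ℝ) :
    Tendsto (fun x : ℝ => a * x / Real.sqrt (x ^ 2 - 1)) atTop (𝓝 a) := by
  have hlim : Tendsto (fun y : ℝ => a / Real.sqrt (1 - y ^ 2)) (𝓝 0) (𝓝 a) := by
    have hsqrt : Tendsto (fun y : ℝ => Real.sqrt (1 - y ^ 2)) (𝓝 0) (𝓝 (Real.sqrt (1 - 0 ^ 2))) :=
      ((continuous_const.sub (continuous_pow 2)).sqrt).tendsto 0
    have hdiv : Tendsto (fun y : ℝ => a / Real.sqrt (1 - y ^ 2)) (𝓝 0)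
        (𝓝 (a / Real.sqrt (1 - 0 ^ 2))) :=
      tendsto_const_nhds.div hsqrt (by simp)
    simpa using hdiv
  refine (hlim.comp tendsto_inv_atTop_zero).congr' ?_
  filter_upwards [eventually_gt_atTop 1] with x hx
  have hx0 : 0 < x := one_pos.trans hx
  have hfactor : Real.sqrt (x ^ 2 - 1) = x * Real.sqrt (1 - x⁻¹ ^ 2) := by
    rw [← Real.sqrt_sq hx0.le, ← Real.sqrt_mul (sq_nonneg x), Real.sqrt_sq hx0.le]
    congr 1
    field_simp
  have hpos : 0 < Real.sqrt (1 - x⁻¹ ^ 2) := by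
    rw [Real.sqrt_pos, sub_pos, inv_pow]
    exact inv_lt_one_of_one_lt₀ (one_lt_pow₀ hx two_ne_zero)
  rw [Function.comp_apply, hfactor]
  field_simp

theorem fuzzy_sphere_discrete_euler_characteristic_general
    (N : ℕ) (hN : 1 < N)
    (S : Fin 3 → Matrix (Fin N) (Fin N) ℂ)
    (hcomm : ∀ j k : Fin 3,
      S j * S k - S k * S j =
        Complex.I • ∑ l, (leviCivita ![j, k, l] : ℂ) • S l)
    (hcas : S 0 * S 0 + S 1 * S 1 + S 2 * S 2 =
      ((((N : ℂ) ^ 2 - 1) / 4)) • (1 : Matrix (Fin N) (Fin N) ℂ)) :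
    (-((((2 / Real.sqrt ((N : ℝ) ^ 2 - 1) : ℝ) : ℂ) ^ 2)⁻¹) •
        ∑ i : Fin 3, ∑ j : Fin 3,
          (if i < j then
            ((2 / Real.sqrt ((N : ℝ) ^ 2 - 1) : ℝ) • S i *
                ((2 / Real.sqrt ((N : ℝ) ^ 2 - 1) : ℝ) • S j) -
              (2 / Real.sqrt ((N : ℝ) ^ 2 - 1) : ℝ) • S j *
                ((2 / Real.sqrt ((N : ℝ) ^ 2 - 1) : ℝ) • S i)) ^ 2
          else 0) = (1 : Matrix (Fin N) (Fin N) ℂ)) ∧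
    ((2 / Real.sqrt ((N : ℝ) ^ 2 - 1)) *
        (Matrix.trace (1 : Matrix (Fin N) (Fin N) ℂ)).re =
      2 * (N : ℝ) / Real.sqrt ((N : ℝ) ^ 2 - 1)) ∧
    Filter.Tendsto (fun M : ℕ => 2 * (M : ℝ) / Real.sqrt ((M : ℝ) ^ 2 - 1))
      Filter.atTop (𝓝 2) := by
  set ℏ : ℝ := 2 / Real.sqrt ((N : ℝ) ^ 2 - 1)
  have hpos : (0 : ℝ) < (N : ℝ) ^ 2 - 1 := by
    have : (1 : ℝ) < N := by exact_mod_cast hN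
    nlinarith
  have hℏ : ℏ ^ 2 * (((N : ℝ) ^ 2 - 1) / 4) = 1 := by
    rw [div_pow, Real.sq_sqrt hpos.le]
    field_simp
    norm_num
  have hsum := sum_sq_commutator_eq_neg_casimir (commutator_cyclic_of_leviCivita hcomm)
  refine ⟨?_, ?_, ?_⟩
  · rw [sum_sq_commutator_smul, hsum, hcas, ← Complex.coe_smul, smul_neg, smul_smul, smul_neg,
      smul_smul, ← neg_smul]
    convert one_smul ℂ (1 : Matrix (Fin N) (Fin N) ℂ) using 2
    have hℏ0 : (ℏ : ℂ) ≠ 0 := Complex.ofReal_ne_zero.mpr (by positivity)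
    have hℏℂ : (ℏ : ℂ) ^ 2 * (((N : ℂ) ^ 2 - 1) / 4) = 1 := by exact_mod_cast hℏ
    push_cast
    field_simp
    linear_combination 4 * hℏℂ
  · rw [Matrix.trace_one, Fintype.card_fin, Complex.natCast_re]
    ring
  · exact (tendsto_mul_div_sqrt_sq_sub_one 2).comp tendsto_natCast_atTop_atTop

/-- The round fuzzy sphere: for an `su(2)` representation `S¹,S²,S³` with
Casimir `(N²−1)/4` and `ℏ = 2/√(N²−1)`, `Xⁱ = ℏSⁱ`, one has
`−ℏ⁻² ∑_{i<j} [Xⁱ,Xʲ]² = 1`, and the discrete Euler characteristic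
`χ̂_N = ℏ Tr(1) = 2N/√(N²−1)` converges to `2`. -/
theorem fuzzy_sphere_discrete_euler_characteristic
    (N : ℕ) (hN : 1 < N)
    (S : Fin 3 → Matrix (Fin N) (Fin N) ℂ)
    (hherm : ∀ i, (S i).IsHermitian)
    (hcomm : ∀ j k : Fin 3,
      S j * S k - S k * S j =
        Complex.I • ∑ l, (leviCivita ![j, k, l] : ℂ) • S l)
    (hcas : S 0 * S 0 + S 1 * S 1 + S 2 * S 2 =
      ((((N : ℂ) ^ 2 - 1) / 4)) • (1 : Matrix (Fin N) (Fin N) ℂ)) :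
    (-((((2 / Real.sqrt ((N : ℝ) ^ 2 - 1) : ℝ) : ℂ) ^ 2)⁻¹) •
        ∑ i : Fin 3, ∑ j : Fin 3,
          (if i < j then
            ((2 / Real.sqrt ((N : ℝ) ^ 2 - 1) : ℝ) • S i *
                ((2 / Real.sqrt ((N : ℝ) ^ 2 - 1) : ℝ) • S j) -
              (2 / Real.sqrt ((N : ℝ) ^ 2 - 1) : ℝ) • S j *
                ((2 / Real.sqrt ((N : ℝ) ^ 2 - 1) : ℝ) • S i)) ^ 2
          else 0) = (1 : Matrix (Fin N) (Fin N) ℂ)) ∧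
    ((2 / Real.sqrt ((N : ℝ) ^ 2 - 1)) *
        (Matrix.trace (1 : Matrix (Fin N) (Fin N) ℂ)).re =
      2 * (N : ℝ) / Real.sqrt ((N : ℝ) ^ 2 - 1)) ∧
    Filter.Tendsto (fun M : ℕ => 2 * (M : ℝ) / Real.sqrt ((M : ℝ) ^ 2 - 1))
      Filter.atTop (𝓝 2) :=
  fuzzy_sphere_discrete_euler_characteristic_general N hN S hcomm hcas
end
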